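/- arXiv:math/0406223 — 8 statements merged into one kernel-verified Lean document; each statement's English description precedes it below -/
import Mathlib

section
/- Assume that every object of 𝒜 is a direct summand of an object of 𝒞, i.e., for every object A of 𝒜 there exist an object C of 𝒞 and morphisms i : A → C, r : C → A with r ∘ i = id_A. Then there exists a unique natural transformation t : F₁ → F₂ whose restriction to 𝒞 equals s, i.e., t.app(ι(C)) = s.app(C) for every object C of 𝒞. -/
open CategoryTheory

/-- If every object of an additive category `𝒜` is a direct summand of an object of a full
subcategory `𝒞` (with inclusion `ι`), then any natural transformation `s` between the
restrictions to `𝒞` of two additive functors `F₁ F₂ : 𝒜 ⥤ ℬ` extends uniquely to a natural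
transformation `t : F₁ ⟶ F₂`. -/
theorem stmt_0 {𝒜 : Type*} [Category 𝒜] [Preadditive 𝒜] [Limits.HasFiniteBiproducts 𝒜]
    {ℬ : Type*} [Category ℬ] [Preadditive ℬ] [Limits.HasFiniteBiproducts ℬ]
    {𝒞 : Type*} [Category 𝒞] (ι : 𝒞 ⥤ 𝒜) [ι.Full] [ι.Faithful]
    (F₁ F₂ : 𝒜 ⥤ ℬ) [F₁.Additive] [F₂.Additive]
    (s : ι ⋙ F₁ ⟶ ι ⋙ F₂)
    (h : ∀ X : 𝒜, ∃ (Y : 𝒞) (i : X ⟶ ι.obj Y) (r : ι.obj Y ⟶ X), i ≫ r = 𝟙 X) :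
    ∃! t : F₁ ⟶ F₂, ∀ Y : 𝒞, t.app (ι.obj Y) = s.app Y := by
  choose Y i r hir using h
  -- key naturality-type lemma for s transported along arbitrary maps between objects of 𝒞
  have key : ∀ (Z Z' : 𝒞) (g : ι.obj Z ⟶ ι.obj Z'),
      F₁.map g ≫ s.app Z' = s.app Z ≫ F₂.map g := by
    intro Z Z' g
    have := s.naturality (ι.preimage g)
    simpa using this
  have hnat : ∀ {X X' : 𝒜} (f : X ⟶ X'),
      F₁.map f ≫ (F₁.map (i X') ≫ s.app (Y X') ≫ F₂.map (r X')) =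
        (F₁.map (i X) ≫ s.app (Y X) ≫ F₂.map (r X)) ≫ F₂.map f := by
    intro X X' f
    have hk := key (Y X) (Y X') (r X ≫ f ≫ i X')
    have e1 : f ≫ i X' = i X ≫ r X ≫ f ≫ i X' := by
      rw [reassoc_of% hir X]
    have e2 : (r X ≫ f ≫ i X') ≫ r X' = r X ≫ f := by
      simp [hir X']
    calc F₁.map f ≫ F₁.map (i X') ≫ s.app (Y X') ≫ F₂.map (r X')
        = F₁.map (i X) ≫ F₁.map (r X ≫ f ≫ i X') ≫ s.app (Y X') ≫ F₂.map (r X') := by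
          rw [← Functor.map_comp_assoc, ← Functor.map_comp_assoc]
          conv_lhs => rw [e1]
      _ = F₁.map (i X) ≫ s.app (Y X) ≫ F₂.map ((r X ≫ f ≫ i X') ≫ r X') := by
          rw [reassoc_of% hk]; simp
      _ = (F₁.map (i X) ≫ s.app (Y X) ≫ F₂.map (r X)) ≫ F₂.map f := by
          rw [e2]; simp
  refine ⟨{ app := fun X => F₁.map (i X) ≫ s.app (Y X) ≫ F₂.map (r X)
            naturality := fun X X' f => hnat f }, ?_, ?_⟩
  · intro Z
    have hk := key Z (Y (ι.obj Z)) (i (ι.obj Z))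
    dsimp
    rw [reassoc_of% hk, ← Functor.map_comp, hir]
    simp
  · intro t ht
    ext X
    have := t.naturality (r X)
    dsimp at this ⊢
    calc t.app X = F₁.map (i X ≫ r X) ≫ t.app X := by rw [hir]; simp
      _ = F₁.map (i X) ≫ t.app (ι.obj (Y X)) ≫ F₂.map (r X) := by
          rw [Functor.map_comp, Category.assoc, this]
      _ = F₁.map (i X) ≫ s.app (Y X) ≫ F₂.map (r X) := by rw [ht]
end

section
/- Let v ∈ W be a nonzero vector. Suppose S ⊆ Λ is a subsemigroup such that (i) S + A = Λ, i.e., every element of Λ can be written as s + a with s ∈ S and a ∈ A, and (ii) there is a convex cone C ⊆ W, open in the subspace topology of W and containing v, with A ∩ C ⊆ S. Then there exists a convex cone C̃ ⊆ V, open in V and containing v, such that Λ ∩ C̃ ⊆ S. -/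
/-!
Since `A = Λ ∩ W`, the image of `Λ` in `V ⧸ W` is a finitely generated torsion-free group,
hence free. Lifting a basis to `gᵢ ∈ Λ` and extending its coordinate functionals `ℝ`-linearly
gives functionals `fᵢ` vanishing on `W` with `l ≡ ∑ fᵢ(l) gᵢ (mod A)` for `l ∈ Λ`. Writing
`±gᵢ ∈ S + A`, every `l ∈ Λ` becomes `s + a` with `a ∈ A` and `s` a sum of elements of `S` of
norm `O(dist(l, W))`. For `l` in the open cone spanned by a small ball around `v`, the part
`a = l - s` is then so close to the ray through `v` that it lies in `C`, so `a ∈ S` and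
`l = s + a ∈ S`.
-/

open Metric Submodule
open scoped Pointwise

lemma ConvexCone.isOpen_hull_of_convex {𝕜 E : Type*} [Field 𝕜] [LinearOrder 𝕜]
    [IsStrictOrderedRing 𝕜] [AddCommGroup E] [Module 𝕜 E] [TopologicalSpace E]
    [ContinuousConstSMul 𝕜 E] {s : Set E} (hs : Convex 𝕜 s) (ho : IsOpen s) :
    IsOpen (hull 𝕜 s : Set E) := by
  have : (hull 𝕜 s : Set E) = ⋃ r ∈ Set.Ioi (0 : 𝕜), r • s := by
    rw [coe_hull_of_convex hs]; ext; simp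
  rw [this]
  exact isOpen_biUnion fun r hr => ho.smul₀ (ne_of_gt hr)

lemma AddSubmonoid.add_mem_of_mem_closure {M : Type*} [AddMonoid M] {S : Set M}
    (hS : ∀ x ∈ S, ∀ y ∈ S, x + y ∈ S) {s x : M} (hs : s ∈ closure S) (hx : x ∈ S) :
    s + x ∈ S := by
  induction hs using closure_induction generalizing x with
  | mem a ha => exact hS a ha x hx
  | zero => rwa [zero_add]
  | add a b _ _ ha hb => rw [add_assoc]; exact ha (hb hx)

section Lattice

variable {V ι : Type*} [AddCommGroup V] [Module ℝ V]

lemma Module.Basis.exists_linearMap_eq_of_span_int (b : Module.Basis ι ℝ V)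
    (φ : span ℤ (Set.range b) →ₗ[ℤ] ℤ) :
    ∃ f : V →ₗ[ℝ] ℝ, ∀ x : span ℤ (Set.range b), f x = φ x := by
  let f := b.constr ℝ fun j => (φ (b.restrictScalars ℤ j) : ℝ)
  have hext : (f.restrictScalars ℤ).comp (span ℤ (Set.range b)).subtype
      = (Int.castAddHom ℝ).toIntLinearMap.comp φ :=
    (b.restrictScalars ℤ).ext fun j => by
      simp [f, Module.Basis.restrictScalars_apply]
  exact ⟨f, fun x => LinearMap.congr_fun hext x⟩

theorem Module.Basis.exists_int_coordinates_modulo [Finite ι] (b : Module.Basis ι ℝ V)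
    (W : Submodule ℝ V) (hW : W ≤ span ℝ ((span ℤ (Set.range b) : Set V) ∩ W)) :
    ∃ (m : ℕ) (g : Fin m → V) (f : Fin m → V →ₗ[ℝ] ℝ),
      (∀ i, g i ∈ span ℤ (Set.range b)) ∧ (∀ i, ∀ w ∈ W, f i w = 0) ∧
      ∀ l ∈ span ℤ (Set.range b), ∃ n : Fin m → ℤ,
        (∀ i, f i l = n i) ∧ l - ∑ i, n i • g i ∈ W := by
  set M := span ℤ (Set.range b)
  have : Module.Finite ℤ M := .span_of_finite ℤ (Set.finite_range b)
  have : Module.IsTorsionFree ℤ (V ⧸ W) := .trans ℝ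
  let ψ : M →ₗ[ℤ] V ⧸ W := (W.mkQ.restrictScalars ℤ).comp M.subtype
  have hψ (x : M) : ψ.rangeRestrict x = 0 ↔ (x : V) ∈ W := by
    rw [← Subtype.coe_inj]; exact Submodule.Quotient.mk_eq_zero W
  let β := Module.finBasis ℤ (LinearMap.range ψ)
  choose g hg using fun i => ψ.surjective_rangeRestrict (β i)
  choose f hf using fun i => b.exists_linearMap_eq_of_span_int ((β.coord i).comp ψ.rangeRestrict)
  refine ⟨_, fun i => g i, f, fun i => (g i).2, fun i => ?_, fun l hl => ?_⟩
  · suffices W ≤ LinearMap.ker (f i) from fun w hw => this hw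
    refine hW.trans (span_le.2 fun x ⟨hxM, hxW⟩ => ?_)
    simp [hf i ⟨x, hxM⟩, (hψ ⟨x, hxM⟩).2 hxW]
  · refine ⟨fun i => β.coord i (ψ.rangeRestrict ⟨l, hl⟩), fun i => hf i ⟨l, hl⟩, ?_⟩
    have := (hψ (⟨l, hl⟩ - ∑ i, β.coord i (ψ.rangeRestrict ⟨l, hl⟩) • g i)).1 (by
      simp only [map_sub, map_sum, map_zsmul, hg, Module.Basis.coord_apply, β.sum_repr, sub_self])
    simpa using this

end Lattice

section SemigroupPart

variable {V : Type*} [SeminormedAddCommGroup V] {S : Set V} {A : AddSubgroup V}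

lemma exists_zsmul_sub_mem_norm_le {g : V} (h₁ : ∃ s ∈ S, g - s ∈ A)
    (h₂ : ∃ s ∈ S, -g - s ∈ A) :
    ∃ R, 0 ≤ R ∧ ∀ n : ℤ, ∃ s ∈ AddSubmonoid.closure S, n • g - s ∈ A ∧ ‖s‖ ≤ |(n : ℝ)| * R := by
  obtain ⟨s₁, hs₁, hg₁⟩ := h₁
  obtain ⟨s₂, hs₂, hg₂⟩ := h₂
  have hle (k : ℕ) {x : V} (hx : ‖x‖ ≤ ‖s₁‖ + ‖s₂‖) : ‖k • x‖ ≤ k * (‖s₁‖ + ‖s₂‖) :=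
    norm_nsmul_le.trans (by gcongr)
  refine ⟨‖s₁‖ + ‖s₂‖, by positivity, fun n => ?_⟩
  obtain ⟨k, rfl | rfl⟩ := Int.eq_nat_or_neg n
  · refine ⟨k • s₁, nsmul_mem (AddSubmonoid.subset_closure hs₁) k, ?_, ?_⟩
    · rw [natCast_zsmul, ← nsmul_sub]; exact nsmul_mem hg₁ k
    · simpa using hle k (le_add_of_nonneg_right (norm_nonneg s₂))
  · refine ⟨k • s₂, nsmul_mem (AddSubmonoid.subset_closure hs₂) k, ?_, ?_⟩
    · rw [neg_zsmul, natCast_zsmul, ← neg_nsmul, ← nsmul_sub]; exact nsmul_mem hg₂ k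
    · simpa using hle k (le_add_of_nonneg_left (norm_nonneg s₁))

lemma exists_sum_zsmul_sub_mem_norm_le {κ : Type*} [Fintype κ] {g : κ → V}
    (h₁ : ∀ i, ∃ s ∈ S, g i - s ∈ A) (h₂ : ∀ i, ∃ s ∈ S, -g i - s ∈ A) :
    ∃ R : κ → ℝ, (∀ i, 0 ≤ R i) ∧ ∀ n : κ → ℤ, ∃ s ∈ AddSubmonoid.closure S,
      ∑ i, n i • g i - s ∈ A ∧ ‖s‖ ≤ ∑ i, |(n i : ℝ)| * R i := by
  choose R hR0 hR using fun i => exists_zsmul_sub_mem_norm_le (h₁ i) (h₂ i)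
  refine ⟨R, hR0, fun n => ?_⟩
  choose s hsS hsA hsR using fun i => hR i (n i)
  refine ⟨∑ i, s i, sum_mem fun i _ => hsS i, ?_, ?_⟩
  · rw [← Finset.sum_sub_distrib]; exact sum_mem fun i _ => hsA i
  · exact (norm_sum_le _ _).trans (Finset.sum_le_sum fun i _ => hsR i)

end SemigroupPart

theorem Module.Basis.exists_closure_sub_mem_norm_le {V ι : Type*} [NormedAddCommGroup V]
    [NormedSpace ℝ V] [FiniteDimensional ℝ V] [Finite ι] (b : Module.Basis ι ℝ V)
    (W : Submodule ℝ V) (hW : W ≤ span ℝ ((span ℤ (Set.range b) : Set V) ∩ W))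
    {S : Set V} {A : AddSubgroup V} (hA : (A : Set V) = (span ℤ (Set.range b) : Set V) ∩ W)
    (hcover : ∀ l ∈ span ℤ (Set.range b), ∃ s ∈ S, l - s ∈ A) :
    ∃ K, 0 ≤ K ∧ ∀ l ∈ span ℤ (Set.range b), ∃ s ∈ AddSubmonoid.closure S,
      l - s ∈ A ∧ ∀ w ∈ W, ‖s‖ ≤ K * ‖l - w‖ := by
  obtain ⟨m, g, f, hgΛ, hfW, hcoord⟩ := b.exists_int_coordinates_modulo W hW
  obtain ⟨R, hR0, hR⟩ := exists_sum_zsmul_sub_mem_norm_le (A := A)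
    (fun i => hcover _ (hgΛ i)) (fun i => hcover _ (neg_mem (hgΛ i)))
  let F i := LinearMap.toContinuousLinearMap (f i)
  refine ⟨∑ i, ‖F i‖ * R i, Finset.sum_nonneg fun i _ => mul_nonneg (norm_nonneg _) (hR0 i),
    fun l hl => ?_⟩
  obtain ⟨n, hfn, hlW⟩ := hcoord l hl
  obtain ⟨s, hsS, hsA, hsR⟩ := hR n
  refine ⟨s, hsS, ?_, fun w hw => ?_⟩
  · have hlA : l - ∑ i, n i • g i ∈ A := by
      rw [← SetLike.mem_coe, hA]
      exact ⟨sub_mem hl (sum_mem fun i _ => zsmul_mem (hgΛ i) _), hlW⟩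
    simpa using add_mem hlA hsA
  · have hn i : |(n i : ℝ)| ≤ ‖F i‖ * ‖l - w‖ := by
      rw [← hfn i, ← sub_zero (f i l), ← hfW i w hw, ← map_sub, ← Real.norm_eq_abs]
      exact (F i).le_opNorm (l - w)
    calc ‖s‖ ≤ ∑ i, |(n i : ℝ)| * R i := hsR
      _ ≤ ∑ i, ‖F i‖ * ‖l - w‖ * R i :=
        Finset.sum_le_sum fun i _ => mul_le_mul_of_nonneg_right (hn i) (hR0 i)
      _ = (∑ i, ‖F i‖ * R i) * ‖l - w‖ := by
        rw [Finset.sum_mul]; exact Finset.sum_congr rfl fun i _ => by ring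

lemma inv_smul_sub_mem_ball {V : Type*} [SeminormedAddCommGroup V] [NormedSpace ℝ V]
    {v y s : V} {r ε K : ℝ} (hr : 0 < r) (hK : 0 ≤ K) (hy : y ∈ ball v ε)
    (hs : ‖s‖ ≤ K * ‖r • y - r • v‖) : r⁻¹ • (r • y - s) ∈ ball v (ε * (1 + K)) := by
  rw [← smul_sub, norm_smul, Real.norm_of_nonneg hr.le] at hs
  have hs' : r⁻¹ * ‖s‖ ≤ K * ‖y - v‖ := by
    rw [inv_mul_le_iff₀ hr]; linarith
  rw [mem_ball, dist_eq_norm, smul_sub, inv_smul_smul₀ hr.ne']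
  calc ‖y - r⁻¹ • s - v‖ = ‖(y - v) - r⁻¹ • s‖ := by rw [sub_right_comm]
    _ ≤ ‖y - v‖ + r⁻¹ * ‖s‖ :=
      (norm_sub_le _ _).trans_eq (by rw [norm_smul_of_nonneg (inv_nonneg.2 hr.le)])
    _ ≤ ‖y - v‖ * (1 + K) := by linarith
    _ < ε * (1 + K) := by gcongr; exact mem_ball_iff_norm.1 hy

theorem stmt_1_general {V : Type*} [NormedAddCommGroup V] [NormedSpace ℝ V] [FiniteDimensional ℝ V]
    {ι : Type*} [Fintype ι] (b : Module.Basis ι ℝ V)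
    (Λ : AddSubgroup V) (hΛ : Λ = AddSubgroup.closure (Set.range b))
    (W : Submodule ℝ V)
    (A : AddSubgroup V) (hA : (A : Set V) = (Λ : Set V) ∩ (W : Set V))
    (hAspan : Submodule.span ℝ (A : Set V) = W)
    (S : Set V) (hSadd : ∀ x ∈ S, ∀ y ∈ S, x + y ∈ S)
    (v : V)
    (hcover : ∀ l ∈ Λ, ∃ s ∈ S, ∃ a ∈ A, l = s + a)
    (hcone : ∃ C : Set V, C ⊆ (W : Set V) ∧ Convex ℝ C ∧
      (∀ x ∈ C, ∀ t : ℝ, 0 < t → t • x ∈ C) ∧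
      (∃ U : Set V, IsOpen U ∧ C = U ∩ (W : Set V)) ∧ v ∈ C ∧ (A : Set V) ∩ C ⊆ S) :
    ∃ C : Set V, Convex ℝ C ∧ (∀ x ∈ C, ∀ t : ℝ, 0 < t → t • x ∈ C) ∧
      IsOpen C ∧ v ∈ C ∧ (Λ : Set V) ∩ C ⊆ S := by
  obtain ⟨-, -, -, hCcone, ⟨U, hU, rfl⟩, hvC, hACS⟩ := hcone
  obtain ⟨δ, hδ, hδU⟩ := isOpen_iff.1 hU v hvC.1
  subst hΛ
  rw [← span_int_eq_addSubgroupClosure] at hA hcover ⊢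
  rw [coe_toAddSubgroup] at hA
  obtain ⟨K, hK, hsmall⟩ := b.exists_closure_sub_mem_norm_le W (hA ▸ hAspan.ge) hA
    fun l hl => by obtain ⟨s, hs, a, ha, rfl⟩ := hcover l hl; exact ⟨s, hs, by simpa⟩
  let ε := δ / (1 + K)
  have hε : ε * (1 + K) = δ := div_mul_cancel₀ δ (by positivity)
  refine ⟨ConvexCone.hull ℝ (ball v ε), (ConvexCone.hull ℝ _).convex,
    fun x hx t ht => (ConvexCone.hull ℝ _).smul_mem ht hx,
    ConvexCone.isOpen_hull_of_convex (convex_ball v ε) isOpen_ball,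
    ConvexCone.subset_hull (mem_ball_self (by positivity)), ?_⟩
  rintro l ⟨hlΛ, hl⟩
  rw [ConvexCone.coe_hull_of_convex (convex_ball v ε)] at hl
  obtain ⟨r, hr, y, hy, rfl⟩ := hl
  obtain ⟨s, hs, hsA, hsK⟩ := hsmall _ hlΛ
  have hsW : r • y - s ∈ W := (hA.subset hsA).2
  have hmem : r⁻¹ • (r • y - s) ∈ U ∩ W := ⟨hδU (hε ▸ inv_smul_sub_mem_ball hr hK hy
    (hsK _ (W.smul_mem r hvC.2))), W.smul_mem _ hsW⟩
  have hC : r • y - s ∈ U ∩ W := by simpa [smul_smul, hr.ne'] using hCcone _ hmem r hr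
  simpa using AddSubmonoid.add_mem_of_mem_closure hSadd hs (hACS ⟨hsA, hC⟩)

/-- Let `V` be a finite-dimensional real vector space, `Λ ⊆ V` the lattice generated by a
basis `b`, `W` a subspace such that `A := Λ ∩ W` spans `W`, and `S ⊆ Λ` a subsemigroup such
that `S + A = Λ` and such that `A ∩ C ⊆ S` for some cone `C ⊆ W` that is open in the subspace
topology of `W`, convex and containing a given nonzero `v ∈ W`. Then there is an open convex
cone `C̃ ⊆ V` containing `v` with `Λ ∩ C̃ ⊆ S`. -/
theorem stmt_1 {V : Type*} [NormedAddCommGroup V] [NormedSpace ℝ V] [FiniteDimensional ℝ V]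
    {ι : Type*} [Fintype ι] (b : Module.Basis ι ℝ V)
    (Λ : AddSubgroup V) (hΛ : Λ = AddSubgroup.closure (Set.range b))
    (W : Submodule ℝ V)
    (A : AddSubgroup V) (hA : (A : Set V) = (Λ : Set V) ∩ (W : Set V))
    (hAspan : Submodule.span ℝ (A : Set V) = W)
    (S : Set V) (hSΛ : S ⊆ (Λ : Set V)) (hSadd : ∀ x ∈ S, ∀ y ∈ S, x + y ∈ S)
    (v : V) (hvW : v ∈ W) (hv0 : v ≠ 0)
    (hcover : ∀ l ∈ Λ, ∃ s ∈ S, ∃ a ∈ A, l = s + a)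
    (hcone : ∃ C : Set V, C ⊆ (W : Set V) ∧ Convex ℝ C ∧
      (∀ x ∈ C, ∀ t : ℝ, 0 < t → t • x ∈ C) ∧
      (∃ U : Set V, IsOpen U ∧ C = U ∩ (W : Set V)) ∧ v ∈ C ∧ (A : Set V) ∩ C ⊆ S) :
    ∃ C : Set V, Convex ℝ C ∧ (∀ x ∈ C, ∀ t : ℝ, 0 < t → t • x ∈ C) ∧
      IsOpen C ∧ v ∈ C ∧ (Λ : Set V) ∩ C ⊆ S :=
  stmt_1_general b Λ hΛ W A hA hAspan S hSadd v hcover hcone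
end

section
/- The submonoid G(n,m) of (ℕ^m, +) is finitely generated: there is a finite subset F ⊆ G(n,m) such that every element of G(n,m) is a finite sum of elements of F. -/
/-- For `m ≥ 1`, `n ≥ 0`, the submonoid `G(n,m) = {x ∈ ℕ^m | ∀ i, x i = 0 ∨ x i ≥ n}`
of `(ℕ^m, +)` is finitely generated. -/
theorem stmt_2 (m n : ℕ) (hm : 1 ≤ m) :
    ∃ F : Finset (Fin m → ℕ),
      (↑F : Set (Fin m → ℕ)) ⊆ {x | ∀ i, x i = 0 ∨ n ≤ x i} ∧
      ∀ x : Fin m → ℕ, (∀ i, x i = 0 ∨ n ≤ x i) →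
        x ∈ AddSubmonoid.closure (↑F : Set (Fin m → ℕ)) := by
  classical
  set B := max 1 (2 * n) with hB
  set k := max 1 n with hk
  refine ⟨(Fintype.piFinset fun _ : Fin m => Finset.range (B + 1)).filter
      (fun v => ∀ i, v i = 0 ∨ n ≤ v i), ?_, ?_⟩
  · intro v hv
    simp only [Finset.coe_filter, Set.mem_setOf_eq] at hv
    exact hv.2
  · intro x hx
    suffices H : ∀ s (x : Fin m → ℕ), (∑ i, x i) ≤ s → (∀ i, x i = 0 ∨ n ≤ x i) →
        x ∈ AddSubmonoid.closure
          (((Fintype.piFinset fun _ : Fin m => Finset.range (B + 1)).filter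
            (fun v => ∀ i, v i = 0 ∨ n ≤ v i) : Finset (Fin m → ℕ)) : Set (Fin m → ℕ)) by
      exact H _ x le_rfl hx
    intro s
    induction s with
    | zero =>
      intro x hs hx
      have hx0 : x = 0 := by
        funext j
        have := Finset.single_le_sum (f := x) (fun i _ => Nat.zero_le _) (Finset.mem_univ j)
        simp only [Pi.zero_apply]
        omega
      rw [hx0]
      exact zero_mem _
    | succ s ih =>
      intro x hs hx
      by_cases h : ∀ i, x i ≤ B
      · apply AddSubmonoid.subset_closure
        simp only [Finset.coe_filter, Set.mem_setOf_eq, Fintype.mem_piFinset,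
          Finset.mem_range]
        exact ⟨fun i => Nat.lt_succ_of_le (h i), hx⟩
      · push_neg at h
        obtain ⟨i, hi⟩ := h
        set v : Fin m → ℕ := fun j => if j = i then k else 0 with hv
        have hkB : k ≤ B := by simp [hk, hB]; omega
        have hk1 : 1 ≤ k := le_max_left _ _
        have hvx : ∀ j, v j ≤ x j := by
          intro j
          simp only [hv]
          split
          · subst ‹j = i›; omega
          · exact Nat.zero_le _
        have hvF : v ∈ AddSubmonoid.closure
            (((Fintype.piFinset fun _ : Fin m => Finset.range (B + 1)).filter
              (fun v => ∀ i, v i = 0 ∨ n ≤ v i) : Finset (Fin m → ℕ)) : Set (Fin m → ℕ)) := by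
          apply AddSubmonoid.subset_closure
          simp only [Finset.coe_filter, Set.mem_setOf_eq, Fintype.mem_piFinset,
            Finset.mem_range]
          constructor
          · intro j; simp only [hv]; split <;> omega
          · intro j; simp only [hv]; split
            · right; exact le_max_right _ _
            · left; rfl
        have hxy : x = v + (x - v) := by
          funext j
          simp only [Pi.add_apply, Pi.sub_apply]
          have := hvx j
          omega
        rw [hxy]
        refine add_mem hvF (ih (x - v) ?_ ?_)
        · have hlt : ∑ j, (x - v) j < ∑ j, x j := by
            apply Finset.sum_lt_sum
            · intro j _
              simp only [Pi.sub_apply]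
              exact Nat.sub_le _ _
            · refine ⟨i, Finset.mem_univ i, ?_⟩
              simp only [Pi.sub_apply, hv, if_pos rfl, eq_self_iff_true, if_true]
              have hx1 : 1 ≤ x i := le_trans (le_trans (le_max_left _ _) hi.le) le_rfl
              omega
          exact Nat.lt_succ_iff.mp (lt_of_lt_of_le hlt hs)
        · intro j
          simp only [Pi.sub_apply, hv]
          by_cases hj : j = i
          · subst hj
            simp only [if_pos rfl, eq_self_iff_true, if_true]
            have h2n : 2 * n < x j := lt_of_le_of_lt (le_max_right _ _) hi
            have hnk : n ≤ k := le_max_right _ _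
            have hkn1 : k ≤ n + 1 := max_le (by omega) (by omega)
            omega
          · simp only [if_neg hj, Nat.sub_zero]
            exact hx j
end

section
/- (Langlands' combinatorial lemma.) For every λ ∈ V there exist unique coefficients a_i ≥ 0 and b_i ≥ 0 (i ∈ I) satisfying a_i · b_i = 0 for every i, such that λ = Σ_i a_i ω_i − Σ_i b_i α_i. -/
open RealInnerProductSpace

/-!
Let `p` be the point of the closed convex cone `a₊` nearest to `λ`. The variational inequality
characterising `p` says that `q := p - λ` lies in the inner dual of `a₊` and is orthogonal
to `p`. Expanding `p` in the `ω_i` and `q` in the `α_i` yields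
`a_i = ⟪α_i, p⟫ ≥ 0`, `b_i = ⟪ω_i, q⟫ ≥ 0` (as `ω_i ∈ a₊`) and `Σ a_i b_i = ⟪p, q⟫ = 0`.
For uniqueness, two decompositions `p₁ - q₁ = p₂ - q₂` of this kind satisfy
`‖p₁ - p₂‖² = ⟪p₁ - p₂, q₁ - q₂⟫ = -⟪p₁, q₂⟫ - ⟪p₂, q₁⟫ ≤ 0`.
-/

namespace ProperCone

variable {E : Type*} [NormedAddCommGroup E] [InnerProductSpace ℝ E] [CompleteSpace E]

theorem exists_moreau_decomposition (C : ProperCone ℝ E) (x : E) :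
    ∃ p ∈ C, p - x ∈ innerDual (C : Set E) ∧ ⟪p, p - x⟫ = 0 := by
  obtain ⟨p, hpC, hp⟩ :=
    exists_norm_eq_iInf_of_complete_convex C.nonempty C.isClosed.isComplete C.convex x
  have hvar := (norm_eq_iInf_iff_real_inner_le_zero C.convex hpC).1 hp
  -- test the variational inequality of the nearest point `p` at `w + p`, `0` and `2p`
  refine ⟨p, hpC, mem_innerDual.2 fun w hw => ?_, ?_⟩
  · have := hvar (w + p) (C.add_mem hw hpC)
    rw [add_sub_cancel_right, ← neg_sub, inner_neg_left] at this
    rw [real_inner_comm]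
    linarith
  · have h0 := hvar 0 C.zero_mem
    have h2 := hvar (p + p) (C.add_mem hpC hpC)
    rw [zero_sub, inner_neg_right] at h0
    rw [add_sub_cancel_right] at h2
    rw [← neg_sub, inner_neg_right, real_inner_comm]
    linarith

end ProperCone

theorem eq_of_sub_eq_sub_of_inner_nonneg {E : Type*} [NormedAddCommGroup E]
    [InnerProductSpace ℝ E] {p₁ p₂ q₁ q₂ : E} (h : p₁ - q₁ = p₂ - q₂) (h₁ : ⟪p₁, q₁⟫ = 0)
    (h₂ : ⟪p₂, q₂⟫ = 0) (h₁₂ : 0 ≤ ⟪p₁, q₂⟫) (h₂₁ : 0 ≤ ⟪p₂, q₁⟫) : p₁ = p₂ := by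
  have hpq : p₁ - p₂ = q₁ - q₂ := sub_eq_sub_iff_sub_eq_sub.1 h
  have hle : ⟪p₁ - p₂, p₁ - p₂⟫ ≤ 0 := by
    nth_rewrite 2 [hpq]
    rw [inner_sub_left, inner_sub_right, inner_sub_right]
    linarith
  exact sub_eq_zero.1 (real_inner_self_nonpos.1 hle)

section DualBases

variable {V : Type*} [NormedAddCommGroup V] [InnerProductSpace ℝ V] {ι : Type*} [Fintype ι]
  [DecidableEq ι]

theorem inner_sum_smul_left_of_dual {α ω : ι → V}
    (hω : ∀ i j, ⟪ω i, α j⟫ = if i = j then (1 : ℝ) else 0) (c : ι → ℝ) (j : ι) :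
    ⟪∑ i, c i • ω i, α j⟫ = c j := by
  simp [sum_inner, real_inner_smul_left, hω]

theorem inner_sum_smul_right_of_dual {α ω : ι → V}
    (hω : ∀ i j, ⟪ω i, α j⟫ = if i = j then (1 : ℝ) else 0) (c : ι → ℝ) (j : ι) :
    ⟪ω j, ∑ i, c i • α i⟫ = c j := by
  simp [inner_sum, real_inner_smul_right, hω]

theorem inner_sum_smul_sum_smul_of_dual {α ω : ι → V}
    (hω : ∀ i j, ⟪ω i, α j⟫ = if i = j then (1 : ℝ) else 0) (c d : ι → ℝ) :
    ⟪∑ i, c i • ω i, ∑ i, d i • α i⟫ = ∑ i, c i * d i := by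
  simp only [sum_inner, real_inner_smul_left, inner_sum_smul_right_of_dual hω]

theorem sum_inner_smul_of_dual (α : Module.Basis ι ℝ V) {ω : ι → V}
    (hω : ∀ i j, ⟪ω i, α j⟫ = if i = j then (1 : ℝ) else 0) (v : V) :
    ∑ i, ⟪α i, v⟫ • ω i = v :=
  InnerProductSpace.ext_inner_right_basis α fun j => by
    rw [inner_sum_smul_left_of_dual hω, real_inner_comm]

theorem sum_inner_dual_smul (α : Module.Basis ι ℝ V) {ω : ι → V}
    (hω : ∀ i j, ⟪ω i, α j⟫ = if i = j then (1 : ℝ) else 0) (v : V) :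
    ∑ i, ⟪ω i, v⟫ • α i = v := by
  have hrepr : ∀ i, ⟪ω i, v⟫ = α.repr v i := fun i => by
    conv_lhs => rw [← α.sum_repr v]
    exact inner_sum_smul_right_of_dual hω _ i
  simp only [hrepr, α.sum_repr]

def IsLanglandsDecomposition (α ω : ι → V) (lam : V) (a b : ι → ℝ) : Prop :=
  (∀ i, 0 ≤ a i) ∧ (∀ i, 0 ≤ b i) ∧ (∀ i, a i * b i = 0) ∧
    lam = ∑ i, a i • ω i - ∑ i, b i • α i

theorem IsLanglandsDecomposition.eq {α ω : ι → V}
    (hω : ∀ i j, ⟪ω i, α j⟫ = if i = j then (1 : ℝ) else 0) {lam : V} {a b a' b' : ι → ℝ}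
    (h : IsLanglandsDecomposition α ω lam a b) (h' : IsLanglandsDecomposition α ω lam a' b') :
    a = a' ∧ b = b' := by
  obtain ⟨ha, hb, hab, rfl⟩ := h
  obtain ⟨ha', hb', hab', hlam⟩ := h'
  have hp : ∑ i, a i • ω i = ∑ i, a' i • ω i := by
    refine eq_of_sub_eq_sub_of_inner_nonneg hlam ?_ ?_ ?_ ?_ <;>
      rw [inner_sum_smul_sum_smul_of_dual hω]
    · exact Finset.sum_eq_zero fun i _ => hab i
    · exact Finset.sum_eq_zero fun i _ => hab' i
    · exact Finset.sum_nonneg fun i _ => mul_nonneg (ha i) (hb' i)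
    · exact Finset.sum_nonneg fun i _ => mul_nonneg (ha' i) (hb i)
  have hq : ∑ i, b i • α i = ∑ i, b' i • α i := by
    rw [hp] at hlam
    exact sub_right_injective hlam
  constructor <;> funext j
  · simpa only [inner_sum_smul_left_of_dual hω] using congrArg (⟪·, α j⟫) hp
  · simpa only [inner_sum_smul_right_of_dual hω] using congrArg (⟪ω j, ·⟫) hq

theorem exists_isLanglandsDecomposition [FiniteDimensional ℝ V] (α : Module.Basis ι ℝ V)
    {ω : ι → V} (hω : ∀ i j, ⟪ω i, α j⟫ = if i = j then (1 : ℝ) else 0) (lam : V) :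
    ∃ a b, IsLanglandsDecomposition α ω lam a b := by
  obtain ⟨p, hp, hq, hpq⟩ :=
    (ProperCone.innerDual (Set.range α)).exists_moreau_decomposition lam
  have hω_mem : ∀ i, ω i ∈ ProperCone.innerDual (Set.range α) := by
    refine fun i => ProperCone.mem_innerDual.2 ?_
    rintro _ ⟨j, rfl⟩
    rw [real_inner_comm, hω]
    split_ifs <;> norm_num
  have ha : ∀ i, 0 ≤ ⟪α i, p⟫ := fun i => ProperCone.mem_innerDual.1 hp (Set.mem_range_self i)
  have hb : ∀ i, 0 ≤ ⟪ω i, p - lam⟫ := fun i => ProperCone.mem_innerDual.1 hq (hω_mem i)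
  have hab : ∑ i, ⟪α i, p⟫ * ⟪ω i, p - lam⟫ = 0 := by
    rwa [← inner_sum_smul_sum_smul_of_dual hω, sum_inner_smul_of_dual α hω,
      sum_inner_dual_smul α hω]
  refine ⟨_, _, ha, hb, fun i => ?_, ?_⟩
  · exact (Finset.sum_eq_zero_iff_of_nonneg fun i _ => mul_nonneg (ha i) (hb i)).1 hab i
      (Finset.mem_univ i)
  · rw [sum_inner_smul_of_dual α hω, sum_inner_dual_smul α hω, sub_sub_cancel]

end DualBases

theorem stmt_5_general {V : Type*} [NormedAddCommGroup V] [InnerProductSpace ℝ V]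
    [FiniteDimensional ℝ V] {ι : Type*} [Fintype ι] [DecidableEq ι] (α : Module.Basis ι ℝ V)
    (ω : ι → V) (hω : ∀ i j, ⟪ω i, α j⟫ = if i = j then (1 : ℝ) else 0)
    (lam : V) :
    ∃! ab : (ι → ℝ) × (ι → ℝ),
      (∀ i, 0 ≤ ab.1 i) ∧ (∀ i, 0 ≤ ab.2 i) ∧ (∀ i, ab.1 i * ab.2 i = 0) ∧
      lam = ∑ i, ab.1 i • ω i - ∑ i, ab.2 i • α i := by
  obtain ⟨a, b, h⟩ := exists_isLanglandsDecomposition α hω lam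
  refine ⟨(a, b), h, fun ab h' => ?_⟩
  obtain ⟨ha, hb⟩ := IsLanglandsDecomposition.eq hω h' h
  exact Prod.ext ha hb

/-- Langlands' combinatorial lemma: if `(α i)` is a basis of a real inner product space with
pairwise nonpositive inner products and `(ω i)` is the dual basis, then every `λ` has a unique
decomposition `λ = Σ a i • ω i − Σ b i • α i` with `a i, b i ≥ 0` and `a i * b i = 0`. -/
theorem stmt_5 {V : Type*} [NormedAddCommGroup V] [InnerProductSpace ℝ V]
    [FiniteDimensional ℝ V] {ι : Type*} [Fintype ι] [DecidableEq ι] (α : Module.Basis ι ℝ V)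
    (hα : ∀ i j, i ≠ j → ⟪α i, α j⟫ ≤ 0)
    (ω : ι → V) (hω : ∀ i j, ⟪ω i, α j⟫ = if i = j then (1 : ℝ) else 0)
    (lam : V) :
    ∃! ab : (ι → ℝ) × (ι → ℝ),
      (∀ i, 0 ≤ ab.1 i) ∧ (∀ i, 0 ≤ ab.2 i) ∧ (∀ i, ab.1 i * ab.2 i = 0) ∧
      lam = ∑ i, ab.1 i • ω i - ∑ i, ab.2 i • α i :=
  stmt_5_general α ω hω lam
end

section
/- For μ ∈ V let ℘(μ) denote the point of the closed dominant cone a₊ nearest to μ (which exists and is unique since a₊ is a nonempty closed convex set). Then ℘(μ) is the least element, with respect to the dominance order ≼, of the set {λ ∈ a₊ : μ ≼ λ}; that is, μ ≼ ℘(μ), ℘(μ) ∈ a₊, and ℘(μ) ≼ λ for every λ ∈ a₊ with μ ≼ λ. -/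
open RealInnerProductSpace

/-!
The nearest point `p` of the closed convex cone `a₊` to `μ` is characterised by the obtuse-angle
conditions `p - μ ∈ a₊*` and `⟪p - μ, p⟫ = 0`. The dual cone `a₊*` is spanned nonnegatively by the
`α i` (pair `p - μ` with the dual basis vectors `ω j ∈ a₊`), which gives `μ ≼ p`, and the second
condition says `⟪p, α i⟫ = 0` wherever `p - μ` has a positive coefficient.
For `λ ∈ a₊` with `μ ≼ λ`, a negative coefficient of `λ - p` at `α i` can only occur where `p - μ`
has a positive one, so `⟪λ - p, α i⟫ = ⟪λ, α i⟫ ≥ 0` there. Since the `α i` are pairwise obtuse,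
the negative part `v` of `λ - p` then satisfies `‖v‖² ≤ ⟪v, λ - p⟫ ≤ 0`, so `p ≼ λ`.
-/

section NearestPoint

variable {V : Type*} [NormedAddCommGroup V] [InnerProductSpace ℝ V]

theorem real_inner_sub_sub_nonpos_of_isMinOn {K : Set V} (hK : Convex ℝ K) {μ p : V}
    (hp : p ∈ K) (hmin : IsMinOn (fun x => ‖μ - x‖) K p) {x : V} (hx : x ∈ K) :
    ⟪μ - p, x - p⟫ ≤ 0 := by
  have : Nonempty K := ⟨⟨p, hp⟩⟩
  have hinf : ‖μ - p‖ = ⨅ w : K, ‖μ - w‖ :=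
    le_antisymm (le_ciInf fun w => isMinOn_iff.1 hmin w w.2)
      (ciInf_le ⟨0, Set.forall_mem_range.2 fun _ => norm_nonneg _⟩ (⟨p, hp⟩ : K))
  exact (norm_eq_iInf_iff_real_inner_le_zero hK hp).1 hinf x hx

namespace PointedCone

variable {K : PointedCone ℝ V} {μ p : V}

theorem real_inner_sub_nonneg_of_isMinOn (hp : p ∈ K)
    (hmin : IsMinOn (fun x => ‖μ - x‖) (K : Set V) p) {x : V} (hx : x ∈ K) :
    0 ≤ ⟪p - μ, x⟫ := by
  have := real_inner_sub_sub_nonpos_of_isMinOn K.convex hp hmin (K.add_mem hx hp)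
  rw [add_sub_cancel_right, ← neg_sub, inner_neg_left] at this
  linarith

theorem real_inner_sub_self_eq_zero_of_isMinOn (hp : p ∈ K)
    (hmin : IsMinOn (fun x => ‖μ - x‖) (K : Set V) p) : ⟪p - μ, p⟫ = 0 := by
  have hzero := real_inner_sub_sub_nonpos_of_isMinOn K.convex hp hmin K.zero_mem
  rw [zero_sub, inner_neg_right, ← neg_sub, inner_neg_left, neg_neg] at hzero
  exact le_antisymm hzero (real_inner_sub_nonneg_of_isMinOn hp hmin hp)

end PointedCone

end NearestPoint

namespace Module.Basis

variable {V : Type*} [NormedAddCommGroup V] [InnerProductSpace ℝ V] {ι : Type*}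
  (α : Basis ι ℝ V)

theorem exists_nonneg_sum_smul_iff [Fintype ι] (y : V) :
    (∃ c : ι → ℝ, (∀ i, 0 ≤ c i) ∧ y = ∑ i, c i • α i) ↔ ∀ i, 0 ≤ α.repr y i := by
  constructor
  · rintro ⟨c, hc, rfl⟩ i
    rw [α.repr_sum_self]
    exact hc i
  · exact fun h => ⟨fun i => α.repr y i, h, (α.sum_repr y).symm⟩

theorem real_inner_eq_sum_repr_mul [Fintype ι] (y x : V) :
    ⟪y, x⟫ = ∑ i, α.repr y i * ⟪α i, x⟫ := by
  conv_lhs => rw [← α.sum_repr y]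
  simp only [sum_inner, real_inner_smul_left]

theorem exists_real_inner_eq_repr [FiniteDimensional ℝ V] (j : ι) :
    ∃ ω : V, ∀ y, ⟪ω, y⟫ = α.repr y j :=
  ⟨(InnerProductSpace.toDual ℝ V).symm (LinearMap.toContinuousLinearMap (α.coord j)),
    fun _ => InnerProductSpace.toDual_symm_apply⟩

theorem repr_nonneg_of_forall_real_inner_nonneg [FiniteDimensional ℝ V] {y : V}
    (hy : ∀ x, (∀ i, 0 ≤ ⟪x, α i⟫) → 0 ≤ ⟪y, x⟫) (j : ι) : 0 ≤ α.repr y j := by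
  classical
  obtain ⟨ω, hω⟩ := α.exists_real_inner_eq_repr j
  have hωmem : ∀ i, 0 ≤ ⟪ω, α i⟫ := fun i => by
    rw [hω, repr_self, Finsupp.single_apply]
    split_ifs <;> norm_num
  rw [← hω, real_inner_comm]
  exact hy ω hωmem

theorem real_inner_eq_zero_of_repr_pos [Fintype ι] {y p : V} (hy : ∀ i, 0 ≤ α.repr y i)
    (hp : ∀ i, 0 ≤ ⟪p, α i⟫) (hyp : ⟪y, p⟫ = 0) {i : ι} (hi : 0 < α.repr y i) :
    ⟪p, α i⟫ = 0 := by
  have hterms : ∀ j, 0 ≤ α.repr y j * ⟪α j, p⟫ := fun j =>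
    mul_nonneg (hy j) (real_inner_comm p (α j) ▸ hp j)
  rw [α.real_inner_eq_sum_repr_mul,
    Finset.sum_eq_zero_iff_of_nonneg fun j _ => hterms j] at hyp
  rw [real_inner_comm]
  exact (mul_eq_zero.1 (hyp i (Finset.mem_univ i))).resolve_left hi.ne'

theorem repr_nonneg_of_real_inner_nonneg_of_repr_neg [Fintype ι]
    (hα : ∀ i j, i ≠ j → ⟪α i, α j⟫ ≤ 0) {x : V}
    (hx : ∀ i, α.repr x i < 0 → 0 ≤ ⟪x, α i⟫) (i : ι) : 0 ≤ α.repr x i := by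
  set b := α.repr x
  set v := ∑ i, min (b i) 0 • α i
  set w := ∑ i, max (b i) 0 • α i
  have hsplit : x = v + w := by
    rw [← Finset.sum_add_distrib]
    simp_rw [← add_smul, min_add_max, add_zero]
    exact (α.sum_repr x).symm
  have hvw : 0 ≤ ⟪v, w⟫ := by
    simp only [v, w, sum_inner, inner_sum, real_inner_smul_left, real_inner_smul_right]
    refine Finset.sum_nonneg fun k _ => Finset.sum_nonneg fun l _ => ?_
    rcases eq_or_ne l k with rfl | hlk
    · rcases le_total (b l) 0 with h | h <;> simp [h]
    · exact mul_nonneg (le_max_right _ _)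
        (mul_nonneg_of_nonpos_of_nonpos (min_le_right _ _) (hα l k hlk))
  have hvx : ⟪v, x⟫ ≤ 0 := by
    simp only [v, sum_inner, real_inner_smul_left]
    refine Finset.sum_nonpos fun k _ => ?_
    rcases lt_or_ge (b k) 0 with h | h
    · exact mul_nonpos_of_nonpos_of_nonneg (min_le_right _ _)
        (real_inner_comm x (α k) ▸ hx k h)
    · simp [h]
  have hv : v = 0 := by
    rw [← inner_self_eq_zero (𝕜 := ℝ)]
    refine le_antisymm ?_ real_inner_self_nonneg
    have hvx_split : ⟪v, x⟫ = ⟪v, v⟫ + ⟪v, w⟫ := by rw [hsplit, inner_add_right]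
    linarith
  have hneg_part : min (b i) 0 = 0 := by
    have := congrArg (fun u => α.repr u i) hv
    simpa only [v, α.repr_sum_self, map_zero, Finsupp.coe_zero, Pi.zero_apply] using this
  exact min_eq_right_iff.1 hneg_part

end Module.Basis

/-- With `(α i)` a basis of a real inner product space having pairwise nonpositive inner
products, `a₊ = {v | ∀ i, ⟪v, α i⟫ ≥ 0}` the closed dominant cone and `≼` the dominance
order (`μ ≼ λ` iff `λ − μ` is a nonnegative combination of the `α i`), the nearest point
`p = ℘(μ)` of `a₊` to `μ` is the least element of `{λ ∈ a₊ | μ ≼ λ}`. -/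
theorem stmt_6 {V : Type*} [NormedAddCommGroup V] [InnerProductSpace ℝ V]
    [FiniteDimensional ℝ V] {ι : Type*} [Fintype ι] (α : Module.Basis ι ℝ V)
    (hα : ∀ i j, i ≠ j → ⟪α i, α j⟫ ≤ 0)
    (μ p : V)
    (hp : ∀ i, 0 ≤ ⟪p, α i⟫)
    (hnear : ∀ x : V, (∀ i, 0 ≤ ⟪x, α i⟫) → ‖μ - p‖ ≤ ‖μ - x‖) :
    (∃ c : ι → ℝ, (∀ i, 0 ≤ c i) ∧ p - μ = ∑ i, c i • α i) ∧
    ∀ lam : V, (∀ i, 0 ≤ ⟪lam, α i⟫) →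
      (∃ c : ι → ℝ, (∀ i, 0 ≤ c i) ∧ lam - μ = ∑ i, c i • α i) →
      ∃ c : ι → ℝ, (∀ i, 0 ≤ c i) ∧ lam - p = ∑ i, c i • α i := by
  set K := ProperCone.innerDual (Set.range α)
  have hmem : ∀ x, x ∈ K ↔ ∀ i, 0 ≤ ⟪x, α i⟫ := fun x => by simp [K, real_inner_comm]
  have hpK : p ∈ K.toPointedCone := (hmem p).2 hp
  have hmin : IsMinOn (fun x => ‖μ - x‖) (K.toPointedCone : Set V) p :=
    isMinOn_iff.2 fun x hx => hnear x ((hmem x).1 hx)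
  have hc : ∀ i, 0 ≤ α.repr (p - μ) i := α.repr_nonneg_of_forall_real_inner_nonneg
    fun x hx => PointedCone.real_inner_sub_nonneg_of_isMinOn hpK hmin ((hmem x).2 hx)
  have hslack := PointedCone.real_inner_sub_self_eq_zero_of_isMinOn hpK hmin
  simp only [α.exists_nonneg_sum_smul_iff]
  refine ⟨hc, fun lam hlam hlamμ => α.repr_nonneg_of_real_inner_nonneg_of_repr_neg hα
    fun i hi => ?_⟩
  have hpμ : 0 < α.repr (p - μ) i := by
    rw [← sub_sub_sub_cancel_right lam p μ, map_sub, Finsupp.sub_apply] at hi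
    linarith [hlamμ i]
  rw [inner_sub_left, α.real_inner_eq_zero_of_repr_pos hc hp hslack hpμ, sub_zero]
  exact hlam i
end

section
/- Let J ⊆ I and let P : V → V be the orthogonal projection onto the orthogonal complement of the span of {α_j : j ∈ J}. Then P preserves the dominance order: if μ ≼ ν then P(μ) ≼ P(ν). Equivalently, for every i ∈ I, P(α_i) is a linear combination of the α_k (k ∈ I) with nonnegative coefficients. -/
open RealInnerProductSpace

/-!
Write `P (α i) = ∑ k, e k • α k`. For `k ∉ J` the coefficient `e k` is that of `α i` itself, so
it vanishes unless `k = i`; for `k ∈ J` we have `⟪α k, P (α i)⟫ = 0`, and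
`⟪α i, P (α i)⟫ = ‖P (α i)‖² ≥ 0`. Hence `⟪α k, P (α i)⟫ ≥ 0` wherever `e k < 0`. For a linearly
independent family with nonpositive off-diagonal Gram entries this forces `e ≥ 0`: with
`v = v⁺ - v⁻` split along the signs of the coefficients, `‖v⁻‖² = ⟪v⁻, v⁺⟫ - ⟪v⁻, v⟫ ≤ 0`.
Monotonicity of `P` for `≼` follows by linearity.
-/

section NonnegComb

variable {V W ι κ : Type*} [AddCommGroup V] [Module ℝ V] [AddCommGroup W] [Module ℝ W]
  [Fintype ι] [Fintype κ]

/-- `0 ≼ v` in the dominance order defined by `α`. -/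
def IsNonnegComb (α : ι → V) (v : V) : Prop :=
  ∃ c : ι → ℝ, (∀ i, 0 ≤ c i) ∧ v = ∑ i, c i • α i

theorem IsNonnegComb.map {α : ι → V} {β : κ → W} (f : V →ₗ[ℝ] W)
    (hf : ∀ i, IsNonnegComb β (f (α i))) {v : V} (hv : IsNonnegComb α v) :
    IsNonnegComb β (f v) := by
  obtain ⟨c, hc, rfl⟩ := hv
  choose d hd hfd using hf
  refine ⟨fun k => ∑ i, c i * d i k,
    fun k => Finset.sum_nonneg fun i _ => mul_nonneg (hc i) (hd i k), ?_⟩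
  simp_rw [map_sum, map_smul, hfd, Finset.smul_sum, smul_smul, Finset.sum_smul]
  exact Finset.sum_comm

end NonnegComb

section NonposGram

variable {V ι : Type*} [NormedAddCommGroup V] [InnerProductSpace ℝ V] [Fintype ι] {α : ι → V}

theorem inner_sum_smul_nonpos_of_mul_eq_zero (hα : ∀ i j, i ≠ j → ⟪α i, α j⟫ ≤ 0)
    {a b : ι → ℝ} (ha : ∀ i, 0 ≤ a i) (hb : ∀ i, 0 ≤ b i) (hab : ∀ i, a i * b i = 0) :
    ⟪∑ i, a i • α i, ∑ j, b j • α j⟫ ≤ 0 := by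
  simp_rw [sum_inner, inner_sum, real_inner_smul_left, real_inner_smul_right]
  refine Finset.sum_nonpos fun i _ => Finset.sum_nonpos fun j _ => ?_
  rcases eq_or_ne i j with rfl | hij
  · rw [← mul_assoc, hab, zero_mul]
  · exact mul_nonpos_of_nonneg_of_nonpos (ha i)
      (mul_nonpos_of_nonneg_of_nonpos (hb j) (hα i j hij))

theorem nonneg_of_inner_sum_smul_nonneg (hli : LinearIndependent ℝ α)
    (hα : ∀ i j, i ≠ j → ⟪α i, α j⟫ ≤ 0) {e : ι → ℝ}
    (he : ∀ j, e j < 0 → 0 ≤ ⟪α j, ∑ k, e k • α k⟫) (j : ι) : 0 ≤ e j := by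
  set v := ∑ k, e k • α k
  set vpos := ∑ k, (e k)⁺ • α k
  set vneg := ∑ k, (e k)⁻ • α k
  have hv : v = vpos - vneg := by
    simp only [v, vpos, vneg, ← Finset.sum_sub_distrib, ← sub_smul, posPart_sub_negPart]
  have hneg_v : 0 ≤ ⟪vneg, v⟫ := by
    rw [sum_inner]
    refine Finset.sum_nonneg fun k _ => ?_
    rw [real_inner_smul_left]
    rcases lt_or_ge (e k) 0 with hk | hk
    · exact mul_nonneg (negPart_nonneg _) (he k hk)
    · rw [negPart_eq_zero.2 hk, zero_mul]
  have hneg_pos : ⟪vneg, vpos⟫ ≤ 0 := by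
    refine inner_sum_smul_nonpos_of_mul_eq_zero hα (fun k => negPart_nonneg _)
      (fun k => posPart_nonneg _) fun k => ?_
    rcases le_total (e k) 0 with hk | hk
    · rw [posPart_eq_zero.2 hk, mul_zero]
    · rw [negPart_eq_zero.2 hk, zero_mul]
  have hvneg : vneg = 0 := by
    rw [← real_inner_self_nonpos]
    calc ⟪vneg, vneg⟫ = ⟪vneg, vpos⟫ - ⟪vneg, v⟫ := by rw [hv, inner_sub_right, sub_sub_cancel]
      _ ≤ 0 := by linarith
  exact negPart_eq_zero.1 (Fintype.linearIndependent_iff.1 hli _ hvneg j)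

end NonposGram

namespace Module.Basis

variable {V ι : Type*} [NormedAddCommGroup V] [InnerProductSpace ℝ V] [FiniteDimensional ℝ V]
  (α : Basis ι ℝ V)

theorem repr_starProjection_orthogonal_span_image_of_notMem {J : Set ι} {k : ι} (hk : k ∉ J)
    (x : V) : α.repr ((Submodule.span ℝ (α '' J))ᗮ.starProjection x) k = α.repr x k := by
  have hsupp := α.mem_span_image.1 ((Submodule.span ℝ (α '' J)).starProjection_apply_mem x)
  rw [Submodule.starProjection_orthogonal_val, map_sub, Finsupp.sub_apply, sub_eq_self]
  exact Finsupp.notMem_support_iff.1 fun h => hk (hsupp h)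

theorem repr_starProjection_orthogonal_span_image_nonneg [Fintype ι]
    (hα : ∀ i j, i ≠ j → ⟪α i, α j⟫ ≤ 0) (J : Set ι) (i j : ι) :
    0 ≤ α.repr ((Submodule.span ℝ (α '' J))ᗮ.starProjection (α i)) j := by
  set K := Submodule.span ℝ (α '' J)
  refine nonneg_of_inner_sum_smul_nonneg α.linearIndependent hα (fun k hk => ?_) j
  rw [α.sum_repr]
  by_cases hkJ : k ∈ J
  · exact (Submodule.inner_right_of_mem_orthogonal
      (Submodule.subset_span (Set.mem_image_of_mem α hkJ)) (Kᗮ.starProjection_apply_mem (α i))).ge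
  obtain rfl | hki := eq_or_ne k i
  · simpa [real_inner_comm] using Kᗮ.re_inner_starProjection_nonneg (α k)
  · rw [α.repr_starProjection_orthogonal_span_image_of_notMem hkJ, α.repr_self,
      Finsupp.single_eq_of_ne hki] at hk
    exact (lt_irrefl 0 hk).elim

end Module.Basis

/-- With `(α i)` a basis of a real inner product space having pairwise nonpositive inner
products, the orthogonal projection `P` onto the orthogonal complement of the span of
`{α j : j ∈ J}` preserves the dominance order; equivalently, each `P (α i)` is a nonnegative
linear combination of the `α k`. -/
theorem stmt_7 {V : Type*} [NormedAddCommGroup V] [InnerProductSpace ℝ V]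
    [FiniteDimensional ℝ V] {ι : Type*} [Fintype ι] (α : Module.Basis ι ℝ V)
    (hα : ∀ i j, i ≠ j → ⟪α i, α j⟫ ≤ 0) (J : Set ι) :
    (∀ μ ν : V,
      (∃ c : ι → ℝ, (∀ i, 0 ≤ c i) ∧ ν - μ = ∑ i, c i • α i) →
      ∃ c : ι → ℝ, (∀ i, 0 ≤ c i) ∧
        ((Submodule.orthogonalProjectionOnto (Submodule.span ℝ (α '' J))ᗮ ν : V) -
          (Submodule.orthogonalProjectionOnto (Submodule.span ℝ (α '' J))ᗮ μ : V)) = ∑ i, c i • α i) ∧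
    ∀ i : ι, ∃ c : ι → ℝ, (∀ j, 0 ≤ c j) ∧
      (Submodule.orthogonalProjectionOnto (Submodule.span ℝ (α '' J))ᗮ (α i) : V) = ∑ j, c j • α j := by
  set P := (Submodule.span ℝ (α '' J))ᗮ.starProjection
  have hP : ∀ i, IsNonnegComb α (P (α i)) := fun i =>
    ⟨_, α.repr_starProjection_orthogonal_span_image_nonneg hα J i, (α.sum_repr _).symm⟩
  simp only [Submodule.coe_orthogonalProjectionOnto_apply]
  refine ⟨fun μ ν hμν => ?_, hP⟩
  rw [← map_sub]
  exact IsNonnegComb.map (P : V →ₗ[ℝ] V) hP hμν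
end

section
/- Let E ∈ Mₙ(R) and F ∈ M_m(R) be idempotent matrices such that the left R-modules Rⁿ·E and R^m·F are isomorphic. Then Tr(E) − Tr(F) ∈ [R,R]; equivalently, Tr(E) and Tr(F) have the same image in the quotient group R/[R,R]. -/
/-!
Hattori–Stallings: an isomorphism `Rⁿ·E ≅ Rᵐ·F` extends by the idempotent projections to maps
`Rⁿ → Rᵐ → Rⁿ`, i.e. to matrices `A ∈ M_{n×m}(R)`, `B ∈ M_{m×n}(R)` acting on row vectors, with
`A * B = E` and `B * A = F`. Then `Tr E - Tr F = ∑ i j, (A i j * B j i - B j i * A i j)`.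
-/

/-- The image `Rⁿ·E` of right multiplication by a matrix `E` on the left `R`-module of row
vectors, as a submodule of `Fin n → R`. -/
def rowImage {R : Type*} [Ring R] {n : ℕ} (E : Matrix (Fin n) (Fin n) R) :
    Submodule R (Fin n → R) where
  carrier := {x | ∃ y : Fin n → R, Matrix.vecMul y E = x}
  add_mem' := by rintro a b ⟨y, rfl⟩ ⟨z, rfl⟩; exact ⟨y + z, Matrix.add_vecMul E y z⟩
  zero_mem' := ⟨0, Matrix.zero_vecMul E⟩
  smul_mem' := by rintro r a ⟨y, rfl⟩; exact ⟨r • y, Matrix.smul_vecMul r y E⟩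

open Matrix

theorem Matrix.trace_mul_sub_trace_mul_mem_closure_commutators {R : Type*}
    [NonUnitalNonAssocRing R] {m n : Type*} [Fintype m] [Fintype n]
    (A : Matrix m n R) (B : Matrix n m R) :
    trace (A * B) - trace (B * A) ∈
      AddSubgroup.closure {z : R | ∃ x y : R, z = x * y - y * x} := by
  have hsum : trace (A * B) - trace (B * A) = ∑ i, ∑ j, (A i j * B j i - B j i * A i j) := by
    simp only [trace, diag, mul_apply, Finset.sum_sub_distrib]
    rw [Finset.sum_comm (f := fun j i => B j i * A i j)]
  rw [hsum]
  exact AddSubgroup.sum_mem _ fun i _ => AddSubgroup.sum_mem _ fun j _ =>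
    AddSubgroup.subset_closure ⟨A i j, B j i, rfl⟩

section RowImage

variable {R : Type*} [Ring R] {n m : ℕ}

def rowImageProj (E : Matrix (Fin n) (Fin n) R) : (Fin n → R) →ₗ[R] rowImage E :=
  E.vecMulLinear.codRestrict (rowImage E) fun x => ⟨x, rfl⟩

theorem rowImageProj_comp_subtype {E : Matrix (Fin n) (Fin n) R} (hE : E * E = E) :
    rowImageProj E ∘ₗ (rowImage E).subtype = LinearMap.id :=
  LinearMap.ext fun ⟨_, y, rfl⟩ => Subtype.ext <| by
    change (y ᵥ* E) ᵥ* E = y ᵥ* E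
    rw [vecMul_vecMul, hE]

/-- For idempotent `E`, this is `f` extended by zero on the complement `Rⁿ·(1 - E)`. -/
def rowImageExtend {E : Matrix (Fin n) (Fin n) R} {F : Matrix (Fin m) (Fin m) R}
    (f : rowImage E →ₗ[R] rowImage F) : (Fin n → R) →ₗ[R] (Fin m → R) :=
  (rowImage F).subtype ∘ₗ f ∘ₗ rowImageProj E

theorem rowImageExtend_id (E : Matrix (Fin n) (Fin n) R) :
    rowImageExtend (LinearMap.id : rowImage E →ₗ[R] rowImage E) = E.toLinearMapRight' :=
  rfl

theorem rowImageExtend_comp {k : ℕ} {E : Matrix (Fin n) (Fin n) R}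
    {F : Matrix (Fin m) (Fin m) R} {G : Matrix (Fin k) (Fin k) R} (hF : F * F = F)
    (g : rowImage F →ₗ[R] rowImage G) (f : rowImage E →ₗ[R] rowImage F) :
    rowImageExtend g ∘ₗ rowImageExtend f = rowImageExtend (g ∘ₗ f) := by
  simp only [rowImageExtend, LinearMap.comp_assoc]
  rw [← LinearMap.comp_assoc _ (rowImage F).subtype (rowImageProj F),
    rowImageProj_comp_subtype hF, LinearMap.id_comp]

theorem exists_mul_eq_mul_eq_of_rowImage_equiv {E : Matrix (Fin n) (Fin n) R}
    {F : Matrix (Fin m) (Fin m) R} (hE : E * E = E) (hF : F * F = F)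
    (φ : rowImage E ≃ₗ[R] rowImage F) :
    ∃ (A : Matrix (Fin n) (Fin m) R) (B : Matrix (Fin m) (Fin n) R), A * B = E ∧ B * A = F := by
  refine ⟨(rowImageExtend φ.toLinearMap).toMatrixRight',
    (rowImageExtend φ.symm.toLinearMap).toMatrixRight', ?_, ?_⟩
  · rw [← LinearMap.toMatrixRight'_comp, rowImageExtend_comp hF, φ.symm_comp,
      rowImageExtend_id, LinearEquiv.apply_symm_apply]
  · rw [← LinearMap.toMatrixRight'_comp, rowImageExtend_comp hE, φ.comp_symm,
      rowImageExtend_id, LinearEquiv.apply_symm_apply]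

end RowImage

/-- (Hattori–Stallings.) If idempotent matrices `E ∈ Mₙ(R)` and `F ∈ Mₘ(R)` have isomorphic
image left `R`-modules `Rⁿ·E ≅ Rᵐ·F`, then `Tr E − Tr F` lies in the additive subgroup
`[R,R]` generated by commutators. -/
theorem stmt_8 {R : Type*} [Ring R] {n m : ℕ}
    (E : Matrix (Fin n) (Fin n) R) (F : Matrix (Fin m) (Fin m) R)
    (hE : E * E = E) (hF : F * F = F)
    (h : Nonempty (rowImage E ≃ₗ[R] rowImage F)) :
    Matrix.trace E - Matrix.trace F ∈
      AddSubgroup.closure {z : R | ∃ x y : R, z = x * y - y * x} := by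
  obtain ⟨φ⟩ := h
  obtain ⟨A, B, hAB, hBA⟩ := exists_mul_eq_mul_eq_of_rowImage_equiv hE hF φ
  rw [← hAB, ← hBA]
  exact trace_mul_sub_trace_mul_mem_closure_commutators A B
end

section
/- Let a ∈ Z, let M be a finitely generated left A-module, let N ⊆ M be an A-submodule, and let n ∈ ℕ. Then for every k-linear functional f : N → k vanishing on aⁿ·N there exist m ∈ ℕ and a k-linear functional g : M → k vanishing on aᵐ·M whose restriction to N equals f. (This is the essential surjectivity statement in the exactness, on finitely generated A-modules, of the functor M ↦ colim_n Hom_k(M/aⁿM, k).) -/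
open Pointwise

/-- Artin–Rees-type lemma, same-universe version. -/
lemma auxAR_same {R M : Type u} [CommRing R] [IsNoetherianRing R] [AddCommGroup M]
    [Module R M] [Module.Finite R M] (a : R) (N : Submodule R M) (n : ℕ) :
    ∃ m : ℕ, n ≤ m ∧ ∀ x : M, x ∈ N → (∃ y : M, a ^ m • y = x) →
      ∃ w : M, w ∈ N ∧ a ^ n • w = x := by
  obtain ⟨c, hc⟩ := Ideal.exists_pow_inf_eq_pow_smul (Ideal.span {a}) N
  refine ⟨n + c, Nat.le_add_right n c, ?_⟩
  rintro x hxN ⟨y, hy⟩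
  have h1 : x ∈ (Ideal.span {a}) ^ (n + c) • (⊤ : Submodule R M) ⊓ N := by
    refine ⟨?_, hxN⟩
    rw [← hy]
    exact Submodule.smul_mem_smul (Ideal.pow_mem_pow (Ideal.mem_span_singleton_self a) _)
      Submodule.mem_top
  rw [hc (n + c) (Nat.le_add_left c n)] at h1
  have h2 : x ∈ (Ideal.span {a}) ^ (n + c - c) • N :=
    Submodule.smul_mono le_rfl inf_le_right h1
  rw [Nat.add_sub_cancel, Ideal.span_singleton_pow,
    Submodule.ideal_span_singleton_smul] at h2
  rw [show ((a ^ n) • N : Submodule R M) =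
      Submodule.map (DistribMulAction.toLinearMap R M (a ^ n)) N from rfl,
    Submodule.mem_map] at h2
  obtain ⟨w, hwN, hwx⟩ := h2
  exact ⟨w, hwN, hwx⟩

/-- Artin–Rees-type lemma, arbitrary universes, via `ULift`. -/
lemma auxAR {R : Type u} {M : Type v} [CommRing R] [IsNoetherianRing R] [AddCommGroup M]
    [Module R M] [Module.Finite R M] (a : R) (N : Submodule R M) (n : ℕ) :
    ∃ m : ℕ, n ≤ m ∧ ∀ x : M, x ∈ N → (∃ y : M, a ^ m • y = x) →
      ∃ w : M, w ∈ N ∧ a ^ n • w = x := by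
  haveI : IsNoetherianRing (ULift.{v} R) :=
    isNoetherianRing_of_ringEquiv R ULift.ringEquiv.symm
  haveI : Module.Finite (ULift.{v} R) (ULift.{u} M) := by
    obtain ⟨s, hs⟩ := Module.Finite.fg_top (R := R) (M := M)
    rw [Module.finite_def, Submodule.fg_def]
    refine ⟨ULift.up '' (s : Set M), (s.finite_toSet.image _), ?_⟩
    rw [eq_top_iff]
    rintro ⟨x⟩ -
    have hx : x ∈ Submodule.span R (s : Set M) := by rw [hs]; trivial
    exact Submodule.span_induction (p := fun z _ =>
        (ULift.up z : ULift.{u} M) ∈ Submodule.span (ULift.{v} R) (ULift.up '' (s : Set M)))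
      (fun z hz => Submodule.subset_span ⟨z, hz, rfl⟩)
      (Submodule.zero_mem _) (fun z w _ _ hz hw => Submodule.add_mem _ hz hw)
      (fun r z _ hz => Submodule.smul_mem _ (ULift.up r) hz) hx
  let N' : Submodule (ULift.{v} R) (ULift.{u} M) :=
    { carrier := {x | x.down ∈ N}
      add_mem' := fun hx hy => N.add_mem hx hy
      zero_mem' := N.zero_mem
      smul_mem' := fun r x hx => N.smul_mem r.down hx }
  obtain ⟨m, hnm, hm⟩ := auxAR_same (ULift.up a) N' n
  refine ⟨m, hnm, ?_⟩
  rintro x hxN ⟨y, hy⟩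
  have hpow : ∀ j : ℕ, (ULift.up a : ULift.{v} R) ^ j = ULift.up (a ^ j) := by
    intro j; induction j with
    | zero => rfl
    | succ j ih => rw [pow_succ, pow_succ, ih]; rfl
  obtain ⟨w, hwN, hwx⟩ := hm (ULift.up x) hxN ⟨ULift.up y, by
    rw [hpow]
    exact congrArg ULift.up hy⟩
  refine ⟨w.down, hwN, ?_⟩
  rw [hpow] at hwx
  exact congrArg ULift.down hwx

/-- Let `k` be a field, `Z` a commutative Noetherian `k`-algebra, and `A` an associative
unital `Z`-algebra that is finite as a `Z`-module. Let `a ∈ Z`, `M` a finitely generated left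
`A`-module, `N ⊆ M` a submodule and `n ∈ ℕ`. Then every `k`-linear functional `f : N → k`
vanishing on `aⁿ·N` extends to a `k`-linear functional `g : M → k` vanishing on `aᵐ·M` for
some `m ∈ ℕ`. -/
theorem stmt_10 {k : Type*} [Field k] {Z : Type*} [CommRing Z] [Algebra k Z]
    [IsNoetherianRing Z]
    {A : Type*} [Ring A] [Algebra Z A] [Algebra k A] [IsScalarTower k Z A]
    [Module.Finite Z A]
    (a : Z) {M : Type*} [AddCommGroup M] [Module A M] [Module k M]
    [IsScalarTower k A M] [Module.Finite A M]
    (N : Submodule A M) (n : ℕ) (f : N →ₗ[k] k)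
    (hf : ∀ y : N, f (algebraMap Z A (a ^ n) • y) = 0) :
    ∃ (m : ℕ) (g : M →ₗ[k] k),
      (∀ x : M, g (algebraMap Z A (a ^ m) • x) = 0) ∧ ∀ y : N, g (y : M) = f y := by
  letI : Module Z M := Module.compHom M (algebraMap Z A)
  haveI hZA : IsScalarTower Z A M := ⟨fun z b x => by
    show (z • b) • x = algebraMap Z A z • b • x
    rw [Algebra.smul_def, mul_smul]⟩
  haveI : Module.Finite Z M := Module.Finite.trans A M
  obtain ⟨m, hnm, key⟩ := auxAR a (N.restrictScalars Z) n
  have keyA : ∀ x : M, x ∈ N → (∃ y : M, algebraMap Z A (a ^ m) • y = x) →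
      ∃ w : M, w ∈ N ∧ algebraMap Z A (a ^ n) • w = x := by
    rintro x hxN ⟨y, hy⟩
    obtain ⟨w, hwN, hwx⟩ := key x hxN ⟨y, hy⟩
    exact ⟨w, hwN, hwx⟩
  -- the k-linear "multiplication by a^m" map
  have hcomm : ∀ (r : A) (cc : k) (x : M), r • cc • x = cc • r • x := fun r cc x =>
    (smul_comm cc r x).symm
  let φ : M →ₗ[k] M :=
    { toFun := fun x => algebraMap Z A (a ^ m) • x
      map_add' := fun x y => smul_add _ x y
      map_smul' := fun cc x => hcomm _ cc x }
  set W : Submodule k M := LinearMap.range φ with hW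
  let q : M →ₗ[k] M ⧸ W := W.mkQ
  let ι : N →ₗ[k] M := (N.subtype).restrictScalars k
  let r : N →ₗ[k] M ⧸ W := q.comp ι
  have hker : LinearMap.ker r ≤ LinearMap.ker f := by
    intro y hy
    have : (y : M) ∈ W := by
      simpa [r, q, ι, Submodule.Quotient.mk_eq_zero] using hy
    obtain ⟨x, hx⟩ := this
    obtain ⟨w, hwN, hwx⟩ := keyA (y : M) y.2 ⟨x, hx⟩
    have : y = algebraMap Z A (a ^ n) • (⟨w, hwN⟩ : N) := by
      ext
      exact hwx.symm
    rw [LinearMap.mem_ker, this, hf]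
  -- descend f to the quotient and transport along the image
  let fbar : (N ⧸ LinearMap.ker r) →ₗ[k] k := (LinearMap.ker r).liftQ f hker
  let e : (N ⧸ LinearMap.ker r) ≃ₗ[k] LinearMap.range r := r.quotKerEquivRange
  let f₂ : LinearMap.range r →ₗ[k] k :=
    fbar.comp (e.symm : LinearMap.range r →ₗ[k] N ⧸ LinearMap.ker r)
  obtain ⟨gbar, hgbar⟩ := LinearMap.exists_extend f₂
  refine ⟨m, gbar.comp q, ?_, ?_⟩
  · intro x
    have hx : q (algebraMap Z A (a ^ m) • x) = 0 := by
      rw [Submodule.mkQ_apply, Submodule.Quotient.mk_eq_zero]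
      exact ⟨x, rfl⟩
    simp only [LinearMap.comp_apply]
    rw [hx, map_zero]
  · intro y
    have h1 : gbar (q (y : M)) = f₂ ⟨r y, LinearMap.mem_range_self r y⟩ := by
      rw [← hgbar]; rfl
    have h2 : e (Submodule.Quotient.mk y) = ⟨r y, LinearMap.mem_range_self r y⟩ :=
      Subtype.ext (r.quotKerEquivRange_apply_mk y)
    have h3 : f₂ ⟨r y, LinearMap.mem_range_self r y⟩ = fbar (Submodule.Quotient.mk y) := by
      rw [← h2]
      simp [f₂]
    have h4 : fbar (Submodule.Quotient.mk y) = f y := rfl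
    simp only [LinearMap.comp_apply]
    rw [h1, h3, h4]
end
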